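/- arXiv:2512.25058 — 2 statements merged into one kernel-verified Lean document; each statement's English description precedes it below -/
import Mathlib

section
/- For every integer n ≥ 2, n ≤ D_prime(n) ≤ 2n - 2, where D_prime(n) = min(2⌊(2n+1-√(8n+1))/2⌋ + 2, 2⌊(2n-√(8n-7)+1)/2⌋ + 1). -/
/-- The bound for primality, `D_prime(n)`. -/
noncomputable def Dprime (n : ℤ) : ℤ :=
  min (2 * ⌊(2 * (n : ℝ) + 1 - Real.sqrt (8 * n + 1)) / 2⌋ + 2)
    (2 * ⌊(2 * (n : ℝ) - Real.sqrt (8 * n - 7) + 1) / 2⌋ + 1)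

private lemma sqrt_le_aux {c a : ℝ} (h0 : 0 ≤ a) (h : c ≤ a ^ 2) :
    Real.sqrt c ≤ a := by
  calc Real.sqrt c ≤ Real.sqrt (a ^ 2) := Real.sqrt_le_sqrt h
    _ = a := Real.sqrt_sq h0

/-- For every integer `n ≥ 2`, `n ≤ D_prime(n) ≤ 2n - 2`. -/
theorem Dprime_bounds (n : ℤ) (hn : 2 ≤ n) :
    n ≤ Dprime n ∧ Dprime n ≤ 2 * n - 2 := by
  have hnr : (2:ℝ) ≤ (n:ℝ) := by exact_mod_cast hn
  have hs1pos : (3:ℝ) < Real.sqrt (8 * n + 1) := by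
    have h9 : Real.sqrt 9 < Real.sqrt (8 * n + 1) :=
      Real.sqrt_lt_sqrt (by norm_num) (by linarith)
    have : Real.sqrt 9 = 3 := by
      rw [show (9:ℝ) = 3 ^ 2 by norm_num, Real.sqrt_sq (by norm_num)]
    linarith
  constructor
  · apply le_min
    · -- n ≤ first term
      rcases Int.even_or_odd n with ⟨k, hk⟩ | ⟨k, hk⟩
      · have hk1 : 1 ≤ k := by omega
        have hkr : (1:ℝ) ≤ (k:ℝ) := by exact_mod_cast hk1
        have hnk : (n:ℝ) = (k:ℝ) + (k:ℝ) := by exact_mod_cast hk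
        have hs : Real.sqrt (8 * n + 1) ≤ 2 * (k:ℝ) + 3 := by
          apply sqrt_le_aux (by linarith)
          rw [hnk]; nlinarith [sq_nonneg (2*(k:ℝ) - 1)]
        have hm : (k - 1 : ℤ) ≤ ⌊(2 * (n : ℝ) + 1 - Real.sqrt (8 * n + 1)) / 2⌋ := by
          rw [Int.le_floor]
          rw [le_div_iff₀ (by norm_num : (0:ℝ) < 2)]
          push_cast
          linarith [hnk, hs]
        omega
      · have hk1 : 1 ≤ k := by omega
        have hkr : (1:ℝ) ≤ (k:ℝ) := by exact_mod_cast hk1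
        have hnk : (n:ℝ) = 2 * (k:ℝ) + 1 := by exact_mod_cast hk
        have hs : Real.sqrt (8 * n + 1) ≤ 2 * (k:ℝ) + 3 := by
          apply sqrt_le_aux (by linarith)
          rw [hnk]; nlinarith
        have hm : (k : ℤ) ≤ ⌊(2 * (n : ℝ) + 1 - Real.sqrt (8 * n + 1)) / 2⌋ := by
          rw [Int.le_floor]
          rw [le_div_iff₀ (by norm_num : (0:ℝ) < 2)]
          push_cast
          linarith [hnk, hs]
        omega
    · -- n ≤ second term
      rcases Int.even_or_odd n with ⟨k, hk⟩ | ⟨k, hk⟩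
      · have hk1 : 1 ≤ k := by omega
        have hkr : (1:ℝ) ≤ (k:ℝ) := by exact_mod_cast hk1
        have hnk : (n:ℝ) = (k:ℝ) + (k:ℝ) := by exact_mod_cast hk
        have hint : (16 * k - 7 : ℤ) ≤ (2 * k + 1) ^ 2 := by
          rcases le_or_gt 2 k with h2 | h2
          · nlinarith
          · have : k = 1 := by omega
            subst this; norm_num
        have hintr : (16 * (k:ℝ) - 7) ≤ (2 * (k:ℝ) + 1) ^ 2 := by exact_mod_cast hint
        have hs : Real.sqrt (8 * n - 7) ≤ 2 * (k:ℝ) + 1 := by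
          apply sqrt_le_aux (by linarith)
          rw [hnk]; linarith
        have hm : (k : ℤ) ≤ ⌊(2 * (n : ℝ) - Real.sqrt (8 * n - 7) + 1) / 2⌋ := by
          rw [Int.le_floor]
          rw [le_div_iff₀ (by norm_num : (0:ℝ) < 2)]
          push_cast
          linarith [hnk, hs]
        omega
      · have hk1 : 1 ≤ k := by omega
        have hkr : (1:ℝ) ≤ (k:ℝ) := by exact_mod_cast hk1
        have hnk : (n:ℝ) = 2 * (k:ℝ) + 1 := by exact_mod_cast hk
        have hs : Real.sqrt (8 * n - 7) ≤ 2 * (k:ℝ) + 3 := by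
          apply sqrt_le_aux (by linarith)
          rw [hnk]; nlinarith [sq_nonneg (2*(k:ℝ) - 1)]
        have hm : (k : ℤ) ≤ ⌊(2 * (n : ℝ) - Real.sqrt (8 * n - 7) + 1) / 2⌋ := by
          rw [Int.le_floor]
          rw [le_div_iff₀ (by norm_num : (0:ℝ) < 2)]
          push_cast
          linarith [hnk, hs]
        omega
  · -- upper bound via the first term
    have hfl : ⌊(2 * (n : ℝ) + 1 - Real.sqrt (8 * n + 1)) / 2⌋ < n - 1 := by
      rw [Int.floor_lt]
      rw [div_lt_iff₀ (by norm_num : (0:ℝ) < 2)]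
      push_cast
      linarith
    have h1 : Dprime n ≤ 2 * ⌊(2 * (n : ℝ) + 1 - Real.sqrt (8 * n + 1)) / 2⌋ + 2 :=
      min_le_left _ _
    omega
end

section
/- Let A be a d × n matrix over an algebraically closed field k of characteristic ≠ 2 whose columns are pairwise orthogonal for the standard bilinear form. Let p be the number of anisotropic columns and q the dimension of the span of the isotropic columns. Then p + q = rank(A) ≤ n and p + 2q ≤ d. -/
/-!
Distinct columns are orthogonal and isotropic columns are self-orthogonal, so the whole column
space lies in the orthogonal complement of `col_iso(A)`, which has dimension `d - q` because the
dot product is nondegenerate. Orthogonal anisotropic vectors span a subspace meeting its own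
orthogonal complement only in `0`; as `col_iso(A)` lies in that complement, the column space is
the direct sum `col_ani(A) ⊕ col_iso(A)`, so `rank A = p + q ≤ d - q`.
-/

open Module Submodule
open LinearMap (BilinForm)

namespace LinearMap.BilinForm

variable {K V : Type*} [Field K] [AddCommGroup V] [Module K V] {B : BilinForm K V}

def anisotropicSpan (B : BilinForm K V) (s : Set V) : Submodule K V :=
  span K {x ∈ s | B x x ≠ 0}

def isotropicSpan (B : BilinForm K V) (s : Set V) : Submodule K V :=
  span K {x ∈ s | B x x = 0}

theorem span_le_orthogonal_span {s t : Set V} (h : ∀ x ∈ s, ∀ y ∈ t, B x y = 0) :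
    span K t ≤ B.orthogonal (span K s) := by
  refine span_le.mpr fun y hy x hx => ?_
  have hker : span K s ≤ LinearMap.ker (B.flip y) := span_le.mpr fun x' hx' => h x' hx' y hy
  exact hker hx

theorem disjoint_span_orthogonal_of_pairwise_anisotropic {t : Set V}
    (ht : t.Pairwise fun x y => B x y = 0) (hani : ∀ x ∈ t, B x x ≠ 0) :
    Disjoint (span K t) (B.orthogonal (span K t)) := by
  rw [disjoint_iff_inf_le]
  rintro x ⟨hx, hxo⟩
  obtain ⟨l, rfl⟩ := (Finsupp.mem_span_iff_linearCombination K t x).mp hx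
  suffices l = 0 by simp [this]
  ext ⟨y, hy⟩
  have hcoeff : B y (Finsupp.linearCombination K (↑) l) = l ⟨y, hy⟩ * B y y := by
    rw [Finsupp.linearCombination_apply, map_finsuppSum, Finsupp.sum_eq_single ⟨y, hy⟩]
    · simp
    · intro z _ hzy
      simp [ht hy z.2 (fun h => hzy (Subtype.ext h.symm))]
    · simp
  have hzero : B y (Finsupp.linearCombination K (↑) l) = 0 := hxo y (subset_span hy)
  simpa [hani y hy] using hcoeff.symm.trans hzero

variable {s : Set V}

theorem isotropicSpan_le_orthogonal_anisotropicSpan (hs : s.Pairwise fun x y => B x y = 0) :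
    B.isotropicSpan s ≤ B.orthogonal (B.anisotropicSpan s) := by
  refine span_le_orthogonal_span fun x hx y hy => hs hx.1 hy.1 ?_
  rintro rfl
  exact hx.2 hy.2

theorem disjoint_anisotropicSpan_isotropicSpan (hs : s.Pairwise fun x y => B x y = 0) :
    Disjoint (B.anisotropicSpan s) (B.isotropicSpan s) :=
  (disjoint_span_orthogonal_of_pairwise_anisotropic (hs.mono fun _ hx => hx.1)
    fun _ hx => hx.2).mono_right (isotropicSpan_le_orthogonal_anisotropicSpan hs)

theorem anisotropicSpan_sup_isotropicSpan (B : BilinForm K V) (s : Set V) :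
    B.anisotropicSpan s ⊔ B.isotropicSpan s = span K s := by
  rw [anisotropicSpan, isotropicSpan, ← span_union, ← Set.sep_or]
  simp only [ne_or_eq, and_true, Set.ofPred_mem_eq]

theorem span_le_orthogonal_isotropicSpan (hs : s.Pairwise fun x y => B x y = 0) :
    span K s ≤ B.orthogonal (B.isotropicSpan s) := by
  refine span_le_orthogonal_span fun x hx y hy => ?_
  by_cases hxy : x = y
  · exact hxy ▸ hx.2
  · exact hs hx.1 hy hxy

variable [FiniteDimensional K V]

theorem finrank_anisotropicSpan_add_finrank_isotropicSpan
    (hs : s.Pairwise fun x y => B x y = 0) :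
    finrank K (B.anisotropicSpan s) + finrank K (B.isotropicSpan s) = finrank K (span K s) := by
  rw [← anisotropicSpan_sup_isotropicSpan, ← finrank_sup_add_finrank_inf_eq,
    (disjoint_anisotropicSpan_isotropicSpan hs).eq_bot, finrank_bot, add_zero]

theorem finrank_span_add_finrank_isotropicSpan_le (hB : B.Nondegenerate)
    (hs : s.Pairwise fun x y => B x y = 0) :
    finrank K (span K s) + finrank K (B.isotropicSpan s) ≤ finrank K V := by
  have hle := finrank_mono (span_le_orthogonal_isotropicSpan hs)
  rw [finrank_orthogonal hB] at hle
  have := (B.isotropicSpan s).finrank_le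
  omega

end LinearMap.BilinForm

theorem setOf_exists_eq_and_eq_sep_range {ι α : Type*} (f : ι → α) (P : α → Prop) :
    {x | ∃ i, x = f i ∧ P (f i)} = {x ∈ Set.range f | P x} := by
  ext x
  constructor
  · rintro ⟨i, rfl, h⟩
    exact ⟨⟨i, rfl⟩, h⟩
  · rintro ⟨⟨i, rfl⟩, h⟩
    exact ⟨i, rfl, h⟩

open LinearMap.BilinForm in
theorem rank_ani_iso_of_orthogonal_columns_general
    (k : Type*) [Field k]
    (d n : ℕ) (A : Matrix (Fin d) (Fin n) k)
    (horth : ∀ j j' : Fin n, j ≠ j' →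
      dotProduct (fun i => A i j) (fun i => A i j') = 0)
    (p q : ℕ)
    (hp : p = finrank k (Submodule.span k
      {v : Fin d → k | ∃ j : Fin n, v = (fun i => A i j) ∧
        dotProduct (fun i => A i j) (fun i => A i j) ≠ 0}))
    (hq : q = finrank k (Submodule.span k
      {v : Fin d → k | ∃ j : Fin n, v = (fun i => A i j) ∧
        dotProduct (fun i => A i j) (fun i => A i j) = 0})) :
    p + q = A.rank ∧ A.rank ≤ n ∧ p + 2 * q ≤ d := by
  set B : BilinForm k (Fin d → k) := dotProductBilin k k
  have hB : B.Nondegenerate :=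
    ⟨fun v hv => dotProduct_eq_zero v hv,
      fun w hw => dotProduct_eq_zero w fun v => (dotProduct_comm w v).trans (hw v)⟩
  have hs : (Set.range A.col).Pairwise fun x y => B x y = 0 := by
    rintro _ ⟨j, rfl⟩ _ ⟨j', rfl⟩ hne
    exact horth j j' (ne_of_apply_ne A.col hne)
  have hp' : p = finrank k (B.anisotropicSpan (Set.range A.col)) := by
    rw [hp, anisotropicSpan, ← setOf_exists_eq_and_eq_sep_range]; rfl
  have hq' : q = finrank k (B.isotropicSpan (Set.range A.col)) := by
    rw [hq, isotropicSpan, ← setOf_exists_eq_and_eq_sep_range]; rfl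
  have hrank : p + q = A.rank := by
    rw [hp', hq', finrank_anisotropicSpan_add_finrank_isotropicSpan hs,
      Matrix.rank_eq_finrank_span_cols]
  have hd := finrank_span_add_finrank_isotropicSpan_le hB hs
  rw [← Matrix.rank_eq_finrank_span_cols, ← hq', ← hrank, finrank_fin_fun] at hd
  exact ⟨hrank, A.rank_le_width, by omega⟩

/-- For a matrix `A ∈ Mat(d,n)` with pairwise orthogonal columns over an algebraically
closed field of characteristic `≠ 2`, if `p` is the dimension of the span of the
anisotropic columns and `q` the dimension of the span of the isotropic columns, then
`p + q = rank(A) ≤ n` and `p + 2q ≤ d`. -/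
theorem rank_ani_iso_of_orthogonal_columns
    (k : Type*) [Field k] [IsAlgClosed k] (hchar : (2 : k) ≠ 0)
    (d n : ℕ) (A : Matrix (Fin d) (Fin n) k)
    (horth : ∀ j j' : Fin n, j ≠ j' →
      dotProduct (fun i => A i j) (fun i => A i j') = 0)
    (p q : ℕ)
    (hp : p = finrank k (Submodule.span k
      {v : Fin d → k | ∃ j : Fin n, v = (fun i => A i j) ∧
        dotProduct (fun i => A i j) (fun i => A i j) ≠ 0}))
    (hq : q = finrank k (Submodule.span k
      {v : Fin d → k | ∃ j : Fin n, v = (fun i => A i j) ∧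
        dotProduct (fun i => A i j) (fun i => A i j) = 0})) :
    p + q = A.rank ∧ A.rank ≤ n ∧ p + 2 * q ≤ d :=
  rank_ani_iso_of_orthogonal_columns_general k d n A horth p q hp hq
end
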